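/- arXiv:2112.12681 — 2 statements merged into one kernel-verified Lean document; each statement's English description precedes it below -/
import Mathlib

section
/- Let V be a commutative unital quantale, F : Set → Set a functor, and μ a monotone κ-ary predicate lifting of F. Then the assignment sending a V-relation r : X ⇸ Y to F̂^μ r = ⨅_{g : Y ⇸ κ} μ(g) ⊸ μ(g · r) : FX ⇸ FY defines a lax extension F̂^μ of F (i.e. it satisfies (L1), (L2), (L3)). Moreover, if μ is V-enriched (that is, [f,f'] ≤ [μ(f), μ(f')] for all f,f' : X ⇸ κ), then F̂^μ is V-enriched. -/
/-!
Common framework: commutative unital quantales, `V`-relations, lax extensions,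
predicate liftings, Moss liftings and the Kantorovich extension.
-/

universe u

namespace Paper

variable {V : Type u} [CommMonoid V] [CompleteLattice V]

/-- A `V`-relation `X ⇸ Y` is a map `X → Y → V`. -/
abbrev VRel (V : Type u) (X Y : Type u) : Type u := X → Y → V

/-- Composition of `V`-relations: `(s · r)(x,z) = ⨆ y, r x y ⊗ s y z`. -/
def vcomp {X Y Z : Type u} (s : VRel V Y Z) (r : VRel V X Y) : VRel V X Z :=
  fun x z => ⨆ y, r x y * s y z

/-- The internal hom of the quantale: `hom u w = ⨆ {v | u ⊗ v ≤ w}`. -/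
def qhom (u w : V) : V := sSup {v | u * v ≤ w}

/-- The lift `s ⊸ r` of `r : X ⇸ Z` along `s : Y ⇸ Z`. -/
def vlift {X Y Z : Type u} (s : VRel V Y Z) (r : VRel V X Z) : VRel V X Y :=
  fun x y => ⨅ z, qhom (s y z) (r x z)

/-- The extension `r ⟜ s` of `r : Y ⇸ Z` along `s : Y ⇸ X`. -/
def vext {X Y Z : Type u} (r : VRel V Y Z) (s : VRel V Y X) : VRel V X Z :=
  fun x z => ⨅ y, qhom (s y x) (r y z)

/-- Converse of a `V`-relation. -/
def vconv {X Y : Type u} (r : VRel V X Y) : VRel V Y X := fun y x => r x y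

/-- A function `f : X → Y` viewed as a `V`-relation `f_∘ : X ⇸ Y`. -/
def graph {X Y : Type u} (f : X → Y) : VRel V X Y :=
  fun x y => ⨆ _ : f x = y, (1 : V)

/-- The identity `V`-relation `1_X : X ⇸ X`. -/
def idRel (V : Type u) [CommMonoid V] [CompleteLattice V] (X : Type u) : VRel V X X :=
  fun x y => ⨆ _ : x = y, (1 : V)

/-- The `V`-category structure `[r,s]` on `V`-relations `X ⇸ Y`. -/
def brkt {X Y : Type u} (r s : VRel V X Y) : V :=
  ⨅ (x : X), ⨅ (y : Y), qhom (r x y) (s x y)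

/-- A lax extension of a `Set`-functor `F` to `V`-relations. -/
structure LaxExt (V : Type u) [CommMonoid V] [CompleteLattice V]
    (F : Type u → Type u) [Functor F] where
  ext : ∀ {X Y : Type u}, VRel V X Y → VRel V (F X) (F Y)
  mono : ∀ {X Y : Type u} {r r' : VRel V X Y}, r ≤ r' → ext r ≤ ext r'
  lax_comp : ∀ {X Y Z : Type u} (r : VRel V X Y) (s : VRel V Y Z),
    vcomp (ext s) (ext r) ≤ ext (vcomp s r)
  map_le : ∀ {X Y : Type u} (f : X → Y),
    graph (Functor.map f : F X → F Y) ≤ ext (graph f)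
  map_conv_le : ∀ {X Y : Type u} (f : X → Y),
    vconv (graph (Functor.map f : F X → F Y)) ≤ ext (vconv (graph f))

/-- A `V`-enriched lax extension. -/
def LaxExt.Enriched {F : Type u → Type u} [Functor F] (E : LaxExt V F) : Prop :=
  ∀ (X Y : Type u) (r r' : VRel V X Y), brkt r r' ≤ brkt (E.ext r) (E.ext r')

/-- A `κ`-ary predicate lifting of `F`, viewed relationally: it sends a
`V`-relation `f : X ⇸ κ` naturally to a `V`-relation `μ f : F X ⇸ 1`. -/
structure PredLift (V : Type u) [CommMonoid V] [CompleteLattice V]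
    (F : Type u → Type u) [Functor F] (κ : Type u) where
  app : ∀ {X : Type u}, VRel V X κ → VRel V (F X) PUnit
  natural : ∀ {X Y : Type u} (h : X → Y) (g : VRel V Y κ),
    app (vcomp g (graph h)) = vcomp (app g) (graph (Functor.map h : F X → F Y))

/-- Monotonicity of a predicate lifting. -/
def PredLift.Monotone {F : Type u → Type u} [Functor F] {κ : Type u}
    (μ : PredLift V F κ) : Prop :=
  ∀ {X : Type u} {f f' : VRel V X κ}, f ≤ f' → μ.app f ≤ μ.app f'

/-- `V`-enrichment of a predicate lifting. -/
def PredLift.Enriched {F : Type u → Type u} [Functor F] {κ : Type u}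
    (μ : PredLift V F κ) : Prop :=
  ∀ (X : Type u) (f f' : VRel V X κ), brkt f f' ≤ brkt (μ.app f) (μ.app f')

/-- A predicate lifting is induced by a lax extension `E` if `μ f = 𝔯 · E f`
for some `𝔯 : F κ ⇸ 1`. -/
def PredLift.InducedBy {F : Type u → Type u} [Functor F] {κ : Type u}
    (μ : PredLift V F κ) (E : LaxExt V F) : Prop :=
  ∃ rr : VRel V (F κ) PUnit, ∀ (X : Type u) (f : VRel V X κ),
    μ.app f = vcomp rr (E.ext f)

/-- The (underlying assignment of the) Moss lifting `μ^𝔨` of a lax extension,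
determined by an element `𝔨 ∈ F κ`: `μ^𝔨 f = (𝔨_∘)° · E f`. -/
def mossApp {F : Type u → Type u} [Functor F] (E : LaxExt V F) {κ : Type u}
    (k : F κ) (X : Type u) (f : VRel V X κ) : VRel V (F X) PUnit :=
  vcomp (vconv (graph (fun _ : PUnit => k))) (E.ext f)

/-- The Kantorovich extension of a `κ`-ary predicate-lifting assignment. -/
def kant {F : Type u → Type u} [Functor F] {κ : Type u}
    (μ : ∀ (X : Type u), VRel V X κ → VRel V (F X) PUnit)
    {X Y : Type u} (r : VRel V X Y) : VRel V (F X) (F Y) :=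
  ⨅ g : VRel V Y κ, vlift (μ Y g) (μ X (vcomp g r))

/-- The Kantorovich extension of a predicate lifting. -/
def PredLift.kant {F : Type u → Type u} [Functor F] {κ : Type u}
    (μ : PredLift V F κ) {X Y : Type u} (r : VRel V X Y) : VRel V (F X) (F Y) :=
  Paper.kant (fun _ g => μ.app g) r

/-- The evaluation `V`-relation `ev_κ : V^κ ⇸ κ`. -/
def evRel (V : Type u) [CommMonoid V] [CompleteLattice V] (κ : Type u) :
    VRel V (κ → V) κ :=
  fun φ i => φ i

end Paper

set_option linter.unusedSectionVars false

section Auxiliary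

open Paper IsQuantale

variable {V : Type u} [CommMonoid V] [CompleteLattice V] [IsQuantale V]

lemma le_qhom_iff {u v w : V} : v ≤ qhom u w ↔ u * v ≤ w :=
  Quantale.rightMulResiduation_le_iff_mul_le

lemma mul_qhom_le {u w : V} : u * qhom u w ≤ w := le_qhom_iff.mp le_rfl

lemma qhom_mono {u w w' : V} (h : w ≤ w') : qhom u w ≤ qhom u w' :=
  le_qhom_iff.mpr (le_trans mul_qhom_le h)

lemma vcomp_mono {X Y Z : Type u} {s s' : VRel V Y Z} {r r' : VRel V X Y}
    (hs : s ≤ s') (hr : r ≤ r') : vcomp s r ≤ vcomp s' r' := fun x z =>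
  iSup_mono fun y => mul_le_mul' (hr x y) (hs y z)

lemma vcomp_assoc {X Y Z W : Type u} (t : VRel V Z W) (s : VRel V Y Z) (r : VRel V X Y) :
    vcomp t (vcomp s r) = vcomp (vcomp t s) r := by
  funext x w
  simp only [vcomp, Quantale.iSup_mul_distrib, Quantale.mul_iSup_distrib]
  rw [iSup_comm]
  exact iSup_congr fun y => iSup_congr fun z => mul_assoc _ _ _

lemma kant_apply {F : Type u → Type u} [Functor F] {κ : Type u}
    (μ : PredLift V F κ) {X Y : Type u} (r : VRel V X Y) (a : F X) (b : F Y) :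
    μ.kant r a b = ⨅ g : VRel V Y κ, ⨅ z : PUnit,
      qhom (μ.app g b z) (μ.app (vcomp g r) a z) := by
  simp [PredLift.kant, Paper.kant, vlift, iInf_apply]

lemma kant_le_qhom {F : Type u → Type u} [Functor F] {κ : Type u}
    (μ : PredLift V F κ) {X Y : Type u} (r : VRel V X Y) (a : F X) (b : F Y)
    (g : VRel V Y κ) (z : PUnit) :
    μ.kant r a b ≤ qhom (μ.app g b z) (μ.app (vcomp g r) a z) := by
  rw [kant_apply]
  exact iInf_le_of_le g (iInf_le _ z)

lemma mul_kant_le {F : Type u → Type u} [Functor F] {κ : Type u}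
    (μ : PredLift V F κ) {X Y : Type u} (r : VRel V X Y) (a : F X) (b : F Y)
    (g : VRel V Y κ) (z : PUnit) :
    μ.app g b z * μ.kant r a b ≤ μ.app (vcomp g r) a z :=
  le_qhom_iff.mp (kant_le_qhom μ r a b g z)

lemma brkt_vcomp_left {X Y : Type u} {κ : Type u} (g : VRel V Y κ)
    (r r' : VRel V X Y) : brkt r r' ≤ brkt (vcomp g r) (vcomp g r') := by
  refine le_iInf fun x => le_iInf fun i => le_qhom_iff.mpr ?_
  rw [show vcomp g r x i = ⨆ y, r x y * g y i from rfl, Quantale.iSup_mul_distrib]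
  refine iSup_le fun y => ?_
  rw [mul_right_comm]
  refine le_trans (mul_le_mul_left ?_ _) (le_iSup (fun y => r' x y * g y i) y)
  exact le_qhom_iff.mp (le_trans (iInf_le_of_le x (iInf_le _ y)) le_rfl)

lemma prop_one_mul_le {p : Prop} {x y : V} (h : p → x ≤ y) :
    (⨆ _ : p, (1 : V)) * x ≤ y := by
  by_cases hp : p
  · rw [iSup_pos hp, one_mul]; exact h hp
  · rw [iSup_neg hp]
    have hb : (⊥ : V) * x = ⊥ := by
      rw [← sSup_empty, IsQuantale.sSup_mul_distrib]; simp
    rw [hb]; exact bot_le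

end Auxiliary

open Paper in
/-- The Kantorovich extension of a monotone predicate lifting
is a lax extension (conditions (L1), (L2), (L3)); it is `V`-enriched whenever
the predicate lifting is `V`-enriched. -/
theorem kantorovich_is_lax_extension {V : Type u} [CommMonoid V] [CompleteLattice V]
    [IsQuantale V] {F : Type u → Type u} [Functor F] [LawfulFunctor F]
    {κ : Type u} (μ : PredLift V F κ) (hmono : μ.Monotone) :
    (∀ (X Y : Type u) (r r' : VRel V X Y), r ≤ r' → μ.kant r ≤ μ.kant r') ∧
    (∀ (X Y Z : Type u) (r : VRel V X Y) (s : VRel V Y Z),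
        vcomp (μ.kant s) (μ.kant r) ≤ μ.kant (vcomp s r)) ∧
    (∀ (X Y : Type u) (f : X → Y),
        graph (Functor.map f : F X → F Y) ≤ μ.kant (graph f) ∧
        vconv (graph (Functor.map f : F X → F Y)) ≤ μ.kant (vconv (graph f))) ∧
    (μ.Enriched → ∀ (X Y : Type u) (r r' : VRel V X Y),
        brkt r r' ≤ brkt (μ.kant r) (μ.kant r')) := by
  refine ⟨?_, ?_, ?_, ?_⟩
  · -- (L1) monotonicity
    intro X Y r r' hle a b
    rw [kant_apply, kant_apply]
    exact iInf_mono fun g => iInf_mono fun z =>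
      qhom_mono (hmono (vcomp_mono le_rfl hle) a z)
  · -- (L2) lax compositionality
    intro X Y Z r s a c
    refine le_trans le_rfl ?_
    rw [kant_apply]
    refine le_iInf fun g => le_iInf fun z => le_qhom_iff.mpr ?_
    rw [show vcomp (μ.kant s) (μ.kant r) a c = ⨆ b, μ.kant r a b * μ.kant s b c from rfl,
      Quantale.mul_iSup_distrib]
    refine iSup_le fun b => ?_
    calc μ.app g c z * (μ.kant r a b * μ.kant s b c)
        = (μ.app g c z * μ.kant s b c) * μ.kant r a b := by
          rw [mul_comm (μ.kant r a b), ← mul_assoc]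
      _ ≤ μ.app (vcomp g s) b z * μ.kant r a b :=
          mul_le_mul_left (mul_kant_le μ s b c g z) _
      _ ≤ μ.app (vcomp (vcomp g s) r) a z := mul_kant_le μ r a b (vcomp g s) z
      _ = μ.app (vcomp g (vcomp s r)) a z := by rw [vcomp_assoc]
  · -- (L3)
    intro X Y f
    constructor
    · intro a b
      refine iSup_le fun hb => ?_
      subst hb
      rw [kant_apply]
      refine le_iInf fun g => le_iInf fun z => le_qhom_iff.mpr ?_
      rw [mul_one, μ.natural f g]
      refine le_iSup_of_le (Functor.map f a) ?_
      show μ.app g (Functor.map f a) z ≤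
        (⨆ _ : Functor.map f a = Functor.map f a, (1 : V)) * μ.app g (Functor.map f a) z
      rw [iSup_pos rfl, one_mul]
    · intro b a
      refine iSup_le fun hb => ?_
      subst hb
      rw [kant_apply]
      refine le_iInf fun g => le_iInf fun z => le_qhom_iff.mpr ?_
      rw [mul_one]
      set h' : VRel V Y κ := vcomp g (vconv (graph f)) with hh'
      have hg : g ≤ vcomp h' (graph f) := by
        intro x i
        refine le_iSup_of_le (f x) ?_
        have h1 : (1 : V) ≤ graph (V := V) f x (f x) := by
          show (1 : V) ≤ ⨆ _ : f x = f x, (1 : V)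
          rw [iSup_pos rfl]
        have h2 : g x i ≤ h' (f x) i := by
          refine le_iSup_of_le x ?_
          show g x i ≤ (⨆ _ : f x = f x, (1 : V)) * g x i
          rw [iSup_pos rfl, one_mul]
        calc g x i ≤ h' (f x) i := h2
          _ = 1 * h' (f x) i := (one_mul _).symm
          _ ≤ graph f x (f x) * h' (f x) i := mul_le_mul_left h1 _
      calc μ.app g a z ≤ μ.app (vcomp h' (graph f)) a z := hmono hg a z
        _ = vcomp (μ.app h') (graph (Functor.map f : F X → F Y)) a z := by
            rw [μ.natural f h']
        _ ≤ μ.app h' (Functor.map f a) z := by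
            refine iSup_le fun b' => ?_
            show (⨆ _ : Functor.map f a = b', (1 : V)) * μ.app h' b' z ≤ _
            exact prop_one_mul_le fun p => by rw [p]
  · -- enrichment
    intro hE X Y r r'
    refine le_iInf fun a => le_iInf fun b => le_qhom_iff.mpr ?_
    rw [kant_apply μ r' a b]
    refine le_iInf fun g => le_iInf fun z => le_qhom_iff.mpr ?_
    have A : μ.app g b z * μ.kant r a b ≤ μ.app (vcomp g r) a z := mul_kant_le μ r a b g z
    have C : μ.app (vcomp g r) a z * brkt r r' ≤ μ.app (vcomp g r') a z := by
      refine le_qhom_iff.mp (le_trans (brkt_vcomp_left g r r') ?_)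
      exact le_trans (hE X (vcomp g r) (vcomp g r')) (iInf_le_of_le a (iInf_le _ z))
    calc μ.app g b z * (μ.kant r a b * brkt r r')
        = (μ.app g b z * μ.kant r a b) * brkt r r' := (mul_assoc _ _ _).symm
      _ ≤ μ.app (vcomp g r) a z * brkt r r' := mul_le_mul_left A _
      _ ≤ μ.app (vcomp g r') a z := C
end

section
/- Let V be a commutative unital quantale, let F, G : Set → Set be functors with a natural transformation i : G → F, let M be a class of monotone predicate liftings of F with Kantorovich extension F̂^M, and let Ĝ_i be the initial lax extension of G with respect to i, given by Ĝ_i r = ((i_Y)_∘)° · F̂^M r · (i_X)_∘ for r : X ⇸ Y. Then Ĝ_i = Ĝ^{M_i}, the Kantorovich extension of G with respect to M_i = { ν_μ | μ ∈ M }, where for each κ-ary μ ∈ M the κ-ary predicate lifting ν_μ of G is given by ν_μ(g) = μ(g) · (i_X)_∘ for g : X ⇸ κ. -/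
/-!
Common framework: commutative unital quantales, `V`-relations, lax extensions,
predicate liftings, Moss liftings and the Kantorovich extension.
-/

universe u

section Aux
open Paper
variable {V : Type u} [CommMonoid V] [CompleteLattice V] [IsQuantale V]

lemma mul_bot' (a : V) : a * (⊥ : V) = ⊥ := by
  rw [show (⊥ : V) = sSup ∅ by simp, IsQuantale.mul_sSup_distrib]; simp

lemma bot_mul' (a : V) : (⊥ : V) * a = ⊥ := by
  rw [show (⊥ : V) = sSup ∅ by simp, IsQuantale.sSup_mul_distrib]; simp

lemma vcomp_graph_right {X Y Z : Type u} (s : VRel V Y Z) (f : X → Y)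
    (x : X) (z : Z) : vcomp s (graph f) x z = s (f x) z := by
  unfold vcomp graph
  apply le_antisymm
  · refine iSup_le fun y => ?_
    by_cases h : f x = y
    · subst h; simp
    · simp [h, bot_mul']
  · refine le_trans ?_ (le_iSup _ (f x))
    simp

lemma vcomp_vconv_graph {X Y Z : Type u} (t : VRel V X Y) (f : Z → Y)
    (x : X) (z : Z) : vcomp (vconv (graph f)) t x z = t x (f z) := by
  unfold vcomp vconv graph
  apply le_antisymm
  · refine iSup_le fun y => ?_
    by_cases h : f z = y
    · subst h; simp
    · simp [h, mul_bot']
  · refine le_trans ?_ (le_iSup _ (f z))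
    simp

end Aux

open Paper in
/-- The initial lax extension of `G` along a natural
transformation `i : G → F` of the Kantorovich extension `F̂^M` is the
Kantorovich extension `Ĝ^{M_i}`, where `M_i = { μ(−) · (i_X)_∘ | μ ∈ M }`. -/
theorem initial_of_kantorovich_is_kantorovich {V : Type u} [CommMonoid V] [CompleteLattice V]
    [IsQuantale V] {F G : Type u → Type u} [Functor F] [LawfulFunctor F]
    [Functor G] [LawfulFunctor G]
    {ι : Type (u + 1)} (κ : ι → Type u) (μ : ∀ j, PredLift V F (κ j))
    (hmono : ∀ j, (μ j).Monotone)
    (nt : ∀ X : Type u, G X → F X)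
    (hnat : ∀ {X Y : Type u} (h : X → Y) (gx : G X),
      nt Y (Functor.map h gx) = Functor.map h (nt X gx))
    (X Y : Type u) (r : VRel V X Y) :
    vcomp (vconv (graph (nt Y))) (vcomp (⨅ j, (μ j).kant r) (graph (nt X))) =
      ⨅ j, kant (fun (Z : Type u) (g : VRel V Z (κ j)) =>
        vcomp ((μ j).app g) (graph (nt Z))) r := by
  funext gx gy
  have L : vcomp (vconv (graph (nt Y))) (vcomp (⨅ j, (μ j).kant r) (graph (nt X))) gx gy
      = ⨅ j, (μ j).kant r (nt X gx) (nt Y gy) := by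
    rw [vcomp_vconv_graph, vcomp_graph_right]
    simp [iInf_apply]
  have R : (⨅ j, kant (fun (Z : Type u) (g : VRel V Z (κ j)) =>
        vcomp ((μ j).app g) (graph (nt Z))) r : VRel V (G X) (G Y)) gx gy
      = ⨅ j, kant (fun (Z : Type u) (g : VRel V Z (κ j)) =>
        vcomp ((μ j).app g) (graph (nt Z))) r gx gy := by
    simp [iInf_apply]
  rw [L, R]
  refine iInf_congr fun j => ?_
  simp only [Paper.kant, PredLift.kant, vlift, iInf_apply]
  refine iInf_congr fun g => ?_
  refine iInf_congr fun z => ?_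
  rw [vcomp_graph_right, vcomp_graph_right]
end
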